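/- arXiv:2102.10026 — 5 statements merged into one kernel-verified Lean document; each statement's English description precedes it below -/
import Mathlib

section
/- Let C be the 2×8 matrix over ℂ with first row (1, 0, 0, 1, 0, 1, −1, 0) and second row (0, −1, 1, 0, 1, 0, 0, 1). Then for every 2×4 matrix A over ℂ and every invertible 2×2 matrix g over ℂ, g·C·(g⁻¹ ⊗ g⁻¹ ⊗ g⁻¹) ≠ A·(I₂ ⊗ A). That is, the 3-algebra with MSC C is not isomorphic to the 3-algebra generated by any 2-dimensional algebra over ℂ. -/
open Matrix Kronecker

/-- Kronecker product of `Fin`-indexed matrices, with row/column blocks ordered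
lexicographically via `finProdFinEquiv`: for 2x2-block factors the columns of
`kron A B` appear in the order (1,1),(1,2),(2,1),(2,2). -/
def kron {F : Type*} [Mul F] {a b c d : ℕ}
    (A : Matrix (Fin a) (Fin b) F) (B : Matrix (Fin c) (Fin d) F) :
    Matrix (Fin (a * c)) (Fin (b * d)) F :=
  Matrix.reindex finProdFinEquiv finProdFinEquiv (A ⊗ₖ B)

/-- MSC of the ternary multiplication f(x,y,z) = x·(y·z) generated by the binary
algebra with MSC `A`, namely T(A) = A·(I₂ ⊗ A), a 2×8 matrix. -/
def T {F : Type*} [Field F] (A : Matrix (Fin 2) (Fin 4) F) : Matrix (Fin 2) (Fin 8) F :=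
  A * kron (1 : Matrix (Fin 2) (Fin 2) F) A


/-- Kronecker product of vectors, compatible with `kron`. -/
def vecKron {F : Type*} [Mul F] {a b : ℕ} (x : Fin a → F) (y : Fin b → F) :
    Fin (a * b) → F :=
  fun i => x (finProdFinEquiv.symm i).1 * y (finProdFinEquiv.symm i).2

lemma kron_mulVec {a b c d : ℕ} (A : Matrix (Fin a) (Fin b) ℂ) (B : Matrix (Fin c) (Fin d) ℂ)
    (x : Fin b → ℂ) (y : Fin d → ℂ) :
    kron A B *ᵥ vecKron x y = vecKron (A *ᵥ x) (B *ᵥ y) := by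
  ext i
  simp only [kron, vecKron, Matrix.mulVec, dotProduct, Matrix.reindex_apply,
    Matrix.submatrix_apply, Matrix.kroneckerMap_apply]
  rw [← Equiv.sum_comp finProdFinEquiv
    (fun j => A (finProdFinEquiv.symm i).1 (finProdFinEquiv.symm j).1 *
      B (finProdFinEquiv.symm i).2 (finProdFinEquiv.symm j).2 *
      (x (finProdFinEquiv.symm j).1 * y (finProdFinEquiv.symm j).2))]
  simp only [Equiv.symm_apply_apply]
  rw [Fintype.sum_prod_type, Fintype.sum_mul_sum]
  exact Finset.sum_congr rfl fun r _ => Finset.sum_congr rfl fun s _ => by ring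

lemma vecKron22 (x y : Fin 2 → ℂ) :
    vecKron x y = ![x 0 * y 0, x 0 * y 1, x 1 * y 0, x 1 * y 1] := by
  ext i
  fin_cases i <;> simp [vecKron, finProdFinEquiv] <;> rfl

lemma vecKron24 (x : Fin 2 → ℂ) (w : Fin 4 → ℂ) : vecKron x w =
    ![x 0 * w 0, x 0 * w 1, x 0 * w 2, x 0 * w 3,
      x 1 * w 0, x 1 * w 1, x 1 * w 2, x 1 * w 3] := by
  ext i
  fin_cases i <;> simp [vecKron, finProdFinEquiv] <;> rfl

/-- Left-multiplication matrix of the algebra with MSC `A`. -/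
def Lam (A : Matrix (Fin 2) (Fin 4) ℂ) (x : Fin 2 → ℂ) : Matrix (Fin 2) (Fin 2) ℂ :=
  !![A 0 0 * x 0 + A 0 2 * x 1, A 0 1 * x 0 + A 0 3 * x 1;
     A 1 0 * x 0 + A 1 2 * x 1, A 1 1 * x 0 + A 1 3 * x 1]

lemma mulVec_vecKron_eq_Lam (A : Matrix (Fin 2) (Fin 4) ℂ) (x z : Fin 2 → ℂ) :
    A *ᵥ vecKron x z = Lam A x *ᵥ z := by
  ext i
  fin_cases i <;>
    simp [Lam, vecKron22, Matrix.mulVec, dotProduct, Fin.sum_univ_four,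
      Fin.sum_univ_two] <;> ring

/-- The bilinear-in-(first two args) matrix of the ternary algebra C at (u,u). -/
def Bc (u : Fin 2 → ℂ) : Matrix (Fin 2) (Fin 2) ℂ :=
  !![u 0 ^ 2 - u 1 ^ 2, 2 * u 0 * u 1; 2 * u 0 * u 1, u 1 ^ 2 - u 0 ^ 2]

lemma C_mulVec (u w : Fin 2 → ℂ) :
    (!![(1 : ℂ), 0, 0, 1, 0, 1, -1, 0; 0, -1, 1, 0, 1, 0, 0, 1]) *ᵥ
      vecKron u (vecKron u w) = Bc u *ᵥ w := by
  ext i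
  fin_cases i <;>
    simp [Bc, vecKron22, vecKron24, Matrix.mulVec, dotProduct, Fin.sum_univ_two,
      Fin.sum_univ_succ] <;> ring

lemma ext_of_mulVec {M N : Matrix (Fin 2) (Fin 2) ℂ}
    (h : ∀ z, M *ᵥ z = N *ᵥ z) : M = N := by
  ext i j
  have := congrFun (h (Pi.single j 1)) i
  simpa using this

lemma trace_sq (M : Matrix (Fin 2) (Fin 2) ℂ) :
    Matrix.trace (M * M) = Matrix.trace M ^ 2 - 2 * M.det := by
  simp [Matrix.trace_fin_two, Matrix.det_fin_two, Matrix.mul_apply, Fin.sum_univ_two]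
  ring

/-- the 3-algebra with MSC C is not isomorphic to the 3-algebra
generated by any 2-dimensional algebra over ℂ. -/
theorem C_not_generated (A : Matrix (Fin 2) (Fin 4) ℂ) (g : GL (Fin 2) ℂ) :
    (g : Matrix (Fin 2) (Fin 2) ℂ) *
        !![(1 : ℂ), 0, 0, 1, 0, 1, -1, 0;
           0, -1, 1, 0, 1, 0, 0, 1] *
        kron (g⁻¹ : Matrix (Fin 2) (Fin 2) ℂ)
          (kron (g⁻¹ : Matrix (Fin 2) (Fin 2) ℂ) (g⁻¹ : Matrix (Fin 2) (Fin 2) ℂ)) ≠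
      T A := by
  intro hEq
  set gm : Matrix (Fin 2) (Fin 2) ℂ := (g : Matrix (Fin 2) (Fin 2) ℂ) with hgm
  set hm : Matrix (Fin 2) (Fin 2) ℂ := gm⁻¹ with hhm
  have hu : IsUnit gm.det := (Matrix.isUnit_iff_isUnit_det _).mp ⟨g, rfl⟩
  have hgh : gm * hm = 1 := Matrix.mul_nonsing_inv _ hu
  have hhg : hm * gm = 1 := Matrix.nonsing_inv_mul _ hu
  -- key trilinear identity
  have key : ∀ x y z : Fin 2 → ℂ,
      gm *ᵥ ((!![(1 : ℂ), 0, 0, 1, 0, 1, -1, 0; 0, -1, 1, 0, 1, 0, 0, 1]) *ᵥ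
        vecKron (hm *ᵥ x) (vecKron (hm *ᵥ y) (hm *ᵥ z))) =
      A *ᵥ vecKron x (A *ᵥ vecKron y z) := by
    intro x y z
    have h1 := congrArg (fun M => M *ᵥ vecKron x (vecKron y z)) hEq
    simp only [T] at h1
    rw [← Matrix.mulVec_mulVec, ← Matrix.mulVec_mulVec, kron_mulVec, kron_mulVec,
      ← Matrix.mulVec_mulVec, kron_mulVec, Matrix.one_mulVec] at h1
    exact h1
  -- the squared left-multiplication identity
  have star : ∀ x : Fin 2 → ℂ,
      Lam A x * Lam A x = gm * Bc (hm *ᵥ x) * hm := by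
    intro x
    symm
    apply ext_of_mulVec
    intro z
    have k := key x x z
    rw [C_mulVec, mulVec_vecKron_eq_Lam, mulVec_vecKron_eq_Lam] at k
    simp only [Matrix.mulVec_mulVec, ← Matrix.mul_assoc] at k
    exact k
  have hdet1 : gm.det * hm.det = 1 := by
    rw [← Matrix.det_mul, hgh, Matrix.det_one]
  -- consequences of star: trace and det equations
  have htr : ∀ x : Fin 2 → ℂ,
      Matrix.trace (Lam A x) ^ 2 - 2 * (Lam A x).det = 0 := by
    intro x
    have h := congrArg Matrix.trace (star x)
    rw [trace_sq, Matrix.trace_mul_cycle gm (Bc (hm *ᵥ x)) hm, hhg, Matrix.one_mul] at h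
    rw [h]
    simp [Bc, Matrix.trace_fin_two]
  have hdet : ∀ x : Fin 2 → ℂ,
      (Lam A x).det ^ 2 = - ((hm *ᵥ x) 0 ^ 2 + (hm *ᵥ x) 1 ^ 2) ^ 2 := by
    intro x
    have h := congrArg Matrix.det (star x)
    rw [Matrix.det_mul, Matrix.det_mul, Matrix.det_mul] at h
    rw [sq, h]
    have : (Bc (hm *ᵥ x)).det = - ((hm *ᵥ x) 0 ^ 2 + (hm *ᵥ x) 1 ^ 2) ^ 2 := by
      simp [Bc, Matrix.det_fin_two_of]
      ring
    rw [this]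
    linear_combination (- ((hm *ᵥ x) 0 ^ 2 + (hm *ᵥ x) 1 ^ 2) ^ 2) * hdet1
  -- trace of Lam is linear in x
  have htrlin : ∀ x : Fin 2 → ℂ,
      Matrix.trace (Lam A x) = (A 0 0 + A 1 1) * x 0 + (A 0 2 + A 1 3) * x 1 := by
    intro x
    simp [Lam, Matrix.trace_fin_two]
    ring
  have hmv : ∀ u : Fin 2 → ℂ, hm *ᵥ (gm *ᵥ u) = u := by
    intro u
    rw [Matrix.mulVec_mulVec, hhg, Matrix.one_mulVec]
  -- determinant and trace vanish at the two isotropic points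
  have hq1 : (Lam A (gm *ᵥ ![1, Complex.I])).det = 0 := by
    have h := hdet (gm *ᵥ ![1, Complex.I])
    rw [hmv] at h
    have h0 : ((![(1:ℂ), Complex.I]) 0 ^ 2 + (![(1:ℂ), Complex.I]) 1 ^ 2) = 0 := by
      simp [Complex.I_sq]
    rw [h0] at h
    simpa using pow_eq_zero_iff two_ne_zero |>.mp (by simpa using h)
  have hq2 : (Lam A (gm *ᵥ ![1, -Complex.I])).det = 0 := by
    have h := hdet (gm *ᵥ ![1, -Complex.I])
    rw [hmv] at h
    have h0 : ((![(1:ℂ), -Complex.I]) 0 ^ 2 + (![(1:ℂ), -Complex.I]) 1 ^ 2) = 0 := by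
      simp [Complex.I_sq]
    rw [h0] at h
    simpa using pow_eq_zero_iff two_ne_zero |>.mp (by simpa using h)
  have ht1 : Matrix.trace (Lam A (gm *ᵥ ![1, Complex.I])) = 0 := by
    have h : Matrix.trace (Lam A (gm *ᵥ ![1, Complex.I])) ^ 2 = 0 := by
      linear_combination htr (gm *ᵥ ![1, Complex.I]) + 2 * hq1
    exact pow_eq_zero_iff two_ne_zero |>.mp h
  have ht2 : Matrix.trace (Lam A (gm *ᵥ ![1, -Complex.I])) = 0 := by
    have h : Matrix.trace (Lam A (gm *ᵥ ![1, -Complex.I])) ^ 2 = 0 := by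
      linear_combination htr (gm *ᵥ ![1, -Complex.I]) + 2 * hq2
    exact pow_eq_zero_iff two_ne_zero |>.mp h
  -- linearity of the trace gives vanishing at gm *ᵥ ![1, 0]
  have hsum : Matrix.trace (Lam A (gm *ᵥ ![1, Complex.I])) +
      Matrix.trace (Lam A (gm *ᵥ ![1, -Complex.I])) =
      2 * Matrix.trace (Lam A (gm *ᵥ ![1, 0])) := by
    rw [htrlin, htrlin, htrlin]
    simp [Matrix.mulVec, dotProduct, Fin.sum_univ_two]
    ring
  have htw : Matrix.trace (Lam A (gm *ᵥ ![1, 0])) = 0 := by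
    have h : 2 * Matrix.trace (Lam A (gm *ᵥ ![1, 0])) = 0 := by
      rw [← hsum, ht1, ht2]; ring
    have := mul_eq_zero.mp h
    simpa using this
  have hqw : (Lam A (gm *ᵥ ![1, 0])).det = 0 := by
    linear_combination (-(1:ℂ)/2) * htr (gm *ᵥ ![1, 0]) +
      (Matrix.trace (Lam A (gm *ᵥ ![1, 0])) / 2) * htw
  have hfin := hdet (gm *ᵥ ![1, 0])
  rw [hmv, hqw] at hfin
  have h0 : ((![(1:ℂ), 0]) 0 ^ 2 + (![(1:ℂ), 0]) 1 ^ 2) = 1 := by simp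
  rw [h0] at hfin
  norm_num at hfin
end

section
/- Over ℂ, the 2×4 matrices A₄(1/3,−1/3), with rows (1/3, 0, 0, 0) and (0, −1/3, 2/3, 0), and A₅(1/3), with rows (1/3, 0, 0, 0) and (1, −1/3, 2/3, 0), are not isomorphic as algebras: there is no invertible 2×2 matrix g over ℂ such that A₅(1/3) = g·A₄(1/3,−1/3)·(g⁻¹ ⊗ g⁻¹). -/
open Matrix Kronecker

lemma kron_mul (A B C D : Matrix (Fin 2) (Fin 2) ℂ) :
    kron A B * kron C D = kron (A*C) (B*D) := by
  unfold kron
  rw [Matrix.reindex_apply, Matrix.reindex_apply, Matrix.reindex_apply,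
    Matrix.submatrix_mul_equiv, Matrix.mul_kronecker_mul]

lemma kron_one : kron (1 : Matrix (Fin 2) (Fin 2) ℂ) (1 : Matrix (Fin 2) (Fin 2) ℂ) = 1 := by
  simp [kron, Matrix.one_kronecker_one, Matrix.reindex_apply, Matrix.submatrix_one_equiv]

lemma kron_ext (A B : Matrix (Fin 2) (Fin 2) ℂ) :
    kron A B = !![A 0 0 * B 0 0, A 0 0 * B 0 1, A 0 1 * B 0 0, A 0 1 * B 0 1;
                  A 0 0 * B 1 0, A 0 0 * B 1 1, A 0 1 * B 1 0, A 0 1 * B 1 1;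
                  A 1 0 * B 0 0, A 1 0 * B 0 1, A 1 1 * B 0 0, A 1 1 * B 0 1;
                  A 1 0 * B 1 0, A 1 0 * B 1 1, A 1 1 * B 1 0, A 1 1 * B 1 1] := by
  ext i j
  fin_cases i <;> fin_cases j <;>
    simp [kron, Matrix.reindex_apply, Matrix.submatrix_apply, finProdFinEquiv] <;> rfl

/-- A₄(1/3,−1/3) and A₅(1/3) are not isomorphic algebras over ℂ. -/
theorem A4_A5_not_isomorphic :
    ¬ ∃ g : GL (Fin 2) ℂ,
      !![(1 : ℂ)/3, 0, 0, 0;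
         1, -(1/3), 2/3, 0] =
        (g : Matrix (Fin 2) (Fin 2) ℂ) *
          !![(1 : ℂ)/3, 0, 0, 0;
             0, -(1/3), 2/3, 0] *
          kron (g⁻¹ : Matrix (Fin 2) (Fin 2) ℂ) (g⁻¹ : Matrix (Fin 2) (Fin 2) ℂ) := by
  rintro ⟨g, h⟩
  have hgg : ((↑g : Matrix (Fin 2) (Fin 2) ℂ))⁻¹ * (↑g : Matrix (Fin 2) (Fin 2) ℂ) = 1 := by
    rw [← Matrix.coe_units_inv]; exact g.inv_mul
  have h2 : !![(1 : ℂ)/3, 0, 0, 0; 1, -(1/3), 2/3, 0] *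
      kron (↑g : Matrix (Fin 2) (Fin 2) ℂ) (↑g : Matrix (Fin 2) (Fin 2) ℂ) =
      (↑g : Matrix (Fin 2) (Fin 2) ℂ) * !![(1 : ℂ)/3, 0, 0, 0; 0, -(1/3), 2/3, 0] := by
    rw [h, Matrix.mul_assoc, kron_mul, hgg, kron_one, Matrix.mul_one]
  set a := (↑g : Matrix (Fin 2) (Fin 2) ℂ) 0 0 with ha'
  set b := (↑g : Matrix (Fin 2) (Fin 2) ℂ) 0 1 with hb'
  set c := (↑g : Matrix (Fin 2) (Fin 2) ℂ) 1 0 with hc'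
  set d := (↑g : Matrix (Fin 2) (Fin 2) ℂ) 1 1 with hd'
  rw [kron_ext] at h2
  have e00 := congrFun (congrFun h2 0) 0
  have e01 := congrFun (congrFun h2 0) 1
  have e02 := congrFun (congrFun h2 0) 2
  have e10 := congrFun (congrFun h2 1) 0
  simp [Matrix.mul_apply, Fin.sum_univ_succ] at e00 e01 e02 e10
  have hb : (↑g : Matrix (Fin 2) (Fin 2) ℂ) 0 1 = 0 := by linear_combination e01 - e02
  have hdet : ((↑g : Matrix (Fin 2) (Fin 2) ℂ)).det ≠ 0 :=
    ((Matrix.isUnit_iff_isUnit_det _).mp g.isUnit).ne_zero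
  rw [Matrix.det_fin_two] at hdet
  have ha : (↑g : Matrix (Fin 2) (Fin 2) ℂ) 0 0 ≠ 0 := fun h0 => hdet (by rw [h0, hb]; ring)
  have ha1 : (↑g : Matrix (Fin 2) (Fin 2) ℂ) 0 0 = 1 :=
    mul_left_cancel₀ ha (by linear_combination 3 * e00)
  exact one_ne_zero (α := ℂ)
    (by linear_combination e10 - ((↑g : Matrix (Fin 2) (Fin 2) ℂ) 0 0 + 1 +
      (↑g : Matrix (Fin 2) (Fin 2) ℂ) 1 0 / 3) * ha1)
end

section
/- Over ℂ, the 2×4 matrices A₄(1,−1), with rows (1, 0, 0, 0) and (0, −1, 0, 0), and A₄(1,1), with rows (1, 0, 0, 0) and (0, 1, 0, 0), are not isomorphic as algebras: there is no invertible 2×2 matrix g over ℂ such that A₄(1,1) = g·A₄(1,−1)·(g⁻¹ ⊗ g⁻¹). -/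
open Matrix Kronecker

lemma kron_mul_s11 {F : Type*} [CommRing F] {a b c p q r : ℕ}
    (A : Matrix (Fin a) (Fin b) F) (B : Matrix (Fin b) (Fin c) F)
    (P : Matrix (Fin p) (Fin q) F) (Q : Matrix (Fin q) (Fin r) F) :
    kron A P * kron B Q = kron (A * B) (P * Q) := by
  simp only [kron, Matrix.reindex_apply, Matrix.submatrix_mul_equiv,
    Matrix.mul_kronecker_mul]

lemma kron_one_s11 {F : Type*} [CommRing F] {a p : ℕ} :
    kron (1 : Matrix (Fin a) (Fin a) F) (1 : Matrix (Fin p) (Fin p) F) = 1 := by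
  simp [kron]

lemma kron_fin_two {F : Type*} [CommRing F] (a b c d a' b' c' d' : F) :
    kron !![a,b;c,d] !![a',b';c',d'] =
    !![a*a', a*b', b*a', b*b';
       a*c', a*d', b*c', b*d';
       c*a', c*b', d*a', d*b';
       c*c', c*d', d*c', d*d'] := by
  ext i j
  fin_cases i <;> fin_cases j <;>
    simp [kron, finProdFinEquiv, Matrix.kroneckerMap_apply, Fin.divNat, Fin.modNat] <;> rfl


/-- A₄(1,−1) and A₄(1,1) are not isomorphic algebras over ℂ. -/
theorem A4_pm_not_isomorphic :
    ¬ ∃ g : GL (Fin 2) ℂ,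
      !![(1 : ℂ), 0, 0, 0;
         0, 1, 0, 0] =
        (g : Matrix (Fin 2) (Fin 2) ℂ) *
          !![(1 : ℂ), 0, 0, 0;
             0, -1, 0, 0] *
          kron (g⁻¹ : Matrix (Fin 2) (Fin 2) ℂ) (g⁻¹ : Matrix (Fin 2) (Fin 2) ℂ) := by
  rintro ⟨g, h⟩
  set M : Matrix (Fin 2) (Fin 2) ℂ := (g : Matrix (Fin 2) (Fin 2) ℂ) with hMdef
  have hu : IsUnit M.det := (Matrix.isUnit_iff_isUnit_det M).mp g.isUnit
  have hinv : M⁻¹ * M = 1 := Matrix.nonsing_inv_mul M hu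
  have key : !![(1 : ℂ), 0, 0, 0; 0, 1, 0, 0] * kron M M =
      M * !![(1 : ℂ), 0, 0, 0; 0, -1, 0, 0] := by
    rw [h, Matrix.mul_assoc, kron_mul_s11, hinv, kron_one_s11, Matrix.mul_one]
  set a := M 0 0; set b := M 0 1; set c := M 1 0; set d := M 1 1
  have hM : M = !![a, b; c, d] := Matrix.eta_fin_two M
  rw [hM, kron_fin_two] at key
  have hdet : a * d - b * c ≠ 0 := by
    have hu' := hu
    rw [hM, Matrix.det_fin_two_of] at hu'
    exact hu'.ne_zero
  have e03 : b * b = 0 := by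
    simpa [Matrix.mul_apply, Fin.sum_univ_four] using Matrix.ext_iff.mpr key 0 3
  have e00 : a * a = a := by
    simpa [Matrix.mul_apply, Fin.sum_univ_four] using Matrix.ext_iff.mpr key 0 0
  have e11 : a * d = -d := by
    simpa [Matrix.mul_apply, Fin.sum_univ_four] using Matrix.ext_iff.mpr key 1 1
  have hb : b = 0 := mul_self_eq_zero.mp e03
  have had : a * d ≠ 0 := by simpa [hb] using hdet
  have ha : a = 1 := by
    have h0 : a ≠ 0 := left_ne_zero_of_mul had
    have : a * (a - 1) = 0 := by ring_nf; linear_combination e00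
    rcases mul_eq_zero.mp this with h1 | h1
    · exact absurd h1 h0
    · exact sub_eq_zero.mp h1
  have hd : d = 0 := by
    rw [ha, one_mul] at e11
    have h2 : d + d = 0 := by linear_combination e11
    exact add_self_eq_zero.mp h2
  exact had (by rw [hd, mul_zero])
end

section
/- Over ℂ, let A be the 2×4 matrix with rows (0, 0, 0, 1) and (0, 0, 1, 0) (this is A₂(0,0,0)). Then A is not associative, i.e. A·(A ⊗ I₂) ≠ A·(I₂ ⊗ A), yet the 3-algebra it generates, T(A) = A·(I₂ ⊗ A), which equals the 2×8 matrix with rows (0, 0, 0, 0, 0, 0, 1, 0) and (0, 0, 0, 0, 0, 0, 0, 1), is totally associative. Thus a totally associative 3-algebra can be generated by a non-associative algebra. -/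
open Matrix Kronecker

/-- A 2×8 MSC `B` is totally associative if
B·(B ⊗ I₂ ⊗ I₂) = B·(I₂ ⊗ B ⊗ I₂) = B·(I₂ ⊗ I₂ ⊗ B). -/
def TotAssoc (B : Matrix (Fin 2) (Fin 8) ℂ) : Prop :=
  B * kron (kron B (1 : Matrix (Fin 2) (Fin 2) ℂ)) (1 : Matrix (Fin 2) (Fin 2) ℂ) =
      B * kron (kron (1 : Matrix (Fin 2) (Fin 2) ℂ) B) (1 : Matrix (Fin 2) (Fin 2) ℂ) ∧
    B * kron (kron (1 : Matrix (Fin 2) (Fin 2) ℂ) B) (1 : Matrix (Fin 2) (Fin 2) ℂ) =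
      B * kron (kron (1 : Matrix (Fin 2) (Fin 2) ℂ) (1 : Matrix (Fin 2) (Fin 2) ℂ)) B

private lemma kron_apply {F : Type*} [Mul F] {a b c d : ℕ}
    (A : Matrix (Fin a) (Fin b) F) (B : Matrix (Fin c) (Fin d) F)
    (i : Fin (a * c)) (j : Fin (b * d)) :
    kron A B i j = A i.divNat j.divNat * B i.modNat j.modNat := rfl

private abbrev Am : Matrix (Fin 2) (Fin 4) ℂ := !![(0 : ℂ), 0, 0, 1; 0, 0, 1, 0]

private abbrev Bm : Matrix (Fin 2) (Fin 8) ℂ :=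
  !![(0 : ℂ), 0, 0, 0, 0, 0, 1, 0; 0, 0, 0, 0, 0, 0, 0, 1]

private abbrev Em : Matrix (Fin 2) (Fin 32) ℂ :=
  Matrix.of ![fun j => if j = 30 then 1 else 0, fun j => if j = 31 then 1 else 0]

private lemma key4 (M : Matrix (Fin 4) (Fin 8) ℂ) : Am * M = Matrix.of ![M 3, M 2] := by
  ext i j
  fin_cases i <;> simp [Matrix.mul_apply, Fin.sum_univ_succ] <;> rfl

private lemma key8 (M : Matrix (Fin 8) (Fin 32) ℂ) : Bm * M = Matrix.of ![M 6, M 7] := by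
  ext i j
  fin_cases i <;> simp [Matrix.mul_apply, Fin.sum_univ_succ] <;> rfl

private lemma hT : Am * kron (1 : Matrix (Fin 2) (Fin 2) ℂ) Am = Bm := by
  rw [key4]
  ext i j
  fin_cases i <;> fin_cases j <;>
    norm_num [kron_apply, Fin.divNat, Fin.modNat, Matrix.one_apply, Fin.ext_iff,
      Fin.coe_ofNat_eq_mod]

private lemma hL : Am * kron Am (1 : Matrix (Fin 2) (Fin 2) ℂ) =
    !![(0 : ℂ), 0, 0, 0, 0, 1, 0, 0; 0, 0, 0, 0, 1, 0, 0, 0] := by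
  rw [key4]
  ext i j
  fin_cases i <;> fin_cases j <;>
    norm_num [kron_apply, Fin.divNat, Fin.modNat, Matrix.one_apply, Fin.ext_iff,
      Fin.coe_ofNat_eq_mod]

private lemma h1 :
    Bm * kron (kron Bm (1 : Matrix (Fin 2) (Fin 2) ℂ)) (1 : Matrix (Fin 2) (Fin 2) ℂ) = Em := by
  rw [key8]
  ext i j
  fin_cases i <;> fin_cases j <;>
    norm_num [kron_apply, Fin.divNat, Fin.modNat, Matrix.one_apply, Fin.ext_iff,
      Fin.coe_ofNat_eq_mod]

private lemma h2 :
    Bm * kron (kron (1 : Matrix (Fin 2) (Fin 2) ℂ) Bm) (1 : Matrix (Fin 2) (Fin 2) ℂ) = Em := by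
  rw [key8]
  ext i j
  fin_cases i <;> fin_cases j <;>
    norm_num [kron_apply, Fin.divNat, Fin.modNat, Matrix.one_apply, Fin.ext_iff,
      Fin.coe_ofNat_eq_mod]

private lemma h3 :
    Bm * kron (kron (1 : Matrix (Fin 2) (Fin 2) ℂ) (1 : Matrix (Fin 2) (Fin 2) ℂ)) Bm = Em := by
  rw [key8]
  ext i j
  fin_cases i <;> fin_cases j <;>
    norm_num [kron_apply, Fin.divNat, Fin.modNat, Matrix.one_apply, Fin.ext_iff,
      Fin.coe_ofNat_eq_mod]

/-- A = A₂(0,0,0) is not associative as a binary algebra, yet the 3-algebra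
it generates, T(A), is totally associative (and equals the stated 2×8 matrix).
Thus a totally associative 3-algebra can be generated by a non-associative
algebra. -/
theorem nonassoc_gives_totAssoc_A2_000 :
    !![(0 : ℂ), 0, 0, 1;
         0, 0, 1, 0] * kron !![(0 : ℂ), 0, 0, 1;
         0, 0, 1, 0] (1 : Matrix (Fin 2) (Fin 2) ℂ) ≠
        !![(0 : ℂ), 0, 0, 1;
         0, 0, 1, 0] * kron (1 : Matrix (Fin 2) (Fin 2) ℂ) !![(0 : ℂ), 0, 0, 1;
         0, 0, 1, 0] ∧
      T !![(0 : ℂ), 0, 0, 1;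
         0, 0, 1, 0] = !![(0 : ℂ), 0, 0, 0, 0, 0, 1, 0;
         0, 0, 0, 0, 0, 0, 0, 1] ∧
      TotAssoc (T !![(0 : ℂ), 0, 0, 1;
         0, 0, 1, 0]) := by
  have hTA : T Am = Bm := hT
  refine ⟨?_, hTA, ?_⟩
  · intro h
    rw [hL, hT] at h
    have h5 := congrFun (congrFun h 0) 5
    exact one_ne_zero (show (1 : ℂ) = 0 from h5)
  · rw [hTA]
    exact ⟨h1.trans h2.symm, h2.trans h3.symm⟩
end

section
/- Over ℂ, let A be the 2×4 matrix with rows (1/2, 0, 0, 1) and (0, −1/2, 1/2, 0) (this is A₂(1/2,0,−1/2)). Then A is not associative, i.e. A·(A ⊗ I₂) ≠ A·(I₂ ⊗ A), yet the 3-algebra it generates, T(A) = A·(I₂ ⊗ A), which equals the 2×8 matrix with rows (1/4, 0, 0, 1/2, 0, −1/2, 1/2, 0) and (0, 1/4, −1/4, 0, 1/4, 0, 0, 1/2), is totally associative. Thus a totally associative 3-algebra can be generated by a non-associative algebra. -/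
open Matrix Kronecker

private lemma finv_2_1 : (1 : Fin 2) = Fin.succ (0 : Fin 1) := rfl
private lemma finv_3_1 : (1 : Fin 3) = Fin.succ (0 : Fin 2) := rfl
private lemma finv_3_2 : (2 : Fin 3) = Fin.succ (1 : Fin 2) := rfl
private lemma finv_4_1 : (1 : Fin 4) = Fin.succ (0 : Fin 3) := rfl
private lemma finv_4_2 : (2 : Fin 4) = Fin.succ (1 : Fin 3) := rfl
private lemma finv_4_3 : (3 : Fin 4) = Fin.succ (2 : Fin 3) := rfl
private lemma finv_5_1 : (1 : Fin 5) = Fin.succ (0 : Fin 4) := rfl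
private lemma finv_5_2 : (2 : Fin 5) = Fin.succ (1 : Fin 4) := rfl
private lemma finv_5_3 : (3 : Fin 5) = Fin.succ (2 : Fin 4) := rfl
private lemma finv_5_4 : (4 : Fin 5) = Fin.succ (3 : Fin 4) := rfl
private lemma finv_6_1 : (1 : Fin 6) = Fin.succ (0 : Fin 5) := rfl
private lemma finv_6_2 : (2 : Fin 6) = Fin.succ (1 : Fin 5) := rfl
private lemma finv_6_3 : (3 : Fin 6) = Fin.succ (2 : Fin 5) := rfl
private lemma finv_6_4 : (4 : Fin 6) = Fin.succ (3 : Fin 5) := rfl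
private lemma finv_6_5 : (5 : Fin 6) = Fin.succ (4 : Fin 5) := rfl
private lemma finv_7_1 : (1 : Fin 7) = Fin.succ (0 : Fin 6) := rfl
private lemma finv_7_2 : (2 : Fin 7) = Fin.succ (1 : Fin 6) := rfl
private lemma finv_7_3 : (3 : Fin 7) = Fin.succ (2 : Fin 6) := rfl
private lemma finv_7_4 : (4 : Fin 7) = Fin.succ (3 : Fin 6) := rfl
private lemma finv_7_5 : (5 : Fin 7) = Fin.succ (4 : Fin 6) := rfl
private lemma finv_7_6 : (6 : Fin 7) = Fin.succ (5 : Fin 6) := rfl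
private lemma finv_8_1 : (1 : Fin 8) = Fin.succ (0 : Fin 7) := rfl
private lemma finv_8_2 : (2 : Fin 8) = Fin.succ (1 : Fin 7) := rfl
private lemma finv_8_3 : (3 : Fin 8) = Fin.succ (2 : Fin 7) := rfl
private lemma finv_8_4 : (4 : Fin 8) = Fin.succ (3 : Fin 7) := rfl
private lemma finv_8_5 : (5 : Fin 8) = Fin.succ (4 : Fin 7) := rfl
private lemma finv_8_6 : (6 : Fin 8) = Fin.succ (5 : Fin 7) := rfl
private lemma finv_8_7 : (7 : Fin 8) = Fin.succ (6 : Fin 7) := rfl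

/-- Entrywise cast of an integer matrix to a complex matrix. -/
noncomputable def cm {m n : ℕ} (M : Matrix (Fin m) (Fin n) ℤ) : Matrix (Fin m) (Fin n) ℂ :=
  M.map (Int.cast)

private lemma cm_kron {a b c d : ℕ} (M : Matrix (Fin a) (Fin b) ℤ) (N : Matrix (Fin c) (Fin d) ℤ) :
    cm (kron M N) = kron (cm M) (cm N) := by
  ext i j
  simp [cm, kron, Matrix.map_apply]

private lemma cm_one {n : ℕ} : cm (1 : Matrix (Fin n) (Fin n) ℤ) = 1 := by
  ext i j
  simp [cm, Matrix.map_apply, Matrix.one_apply]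

private lemma cm_mul {m n p : ℕ} (M : Matrix (Fin m) (Fin n) ℤ) (N : Matrix (Fin n) (Fin p) ℤ) :
    cm (M * N) = cm M * cm N := by
  ext i j
  simp [cm, Matrix.map_apply, Matrix.mul_apply]

private lemma cm_inj {m n : ℕ} {M N : Matrix (Fin m) (Fin n) ℤ} (h : cm M = cm N) : M = N := by
  ext i j
  have := congrFun (congrFun h i) j
  simpa [cm, Matrix.map_apply] using this

private lemma kron_smul_left {a b c d : ℕ} (r : ℂ) (M : Matrix (Fin a) (Fin b) ℂ)
    (N : Matrix (Fin c) (Fin d) ℂ) : kron (r • M) N = r • kron M N := by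
  ext i j
  simp only [kron, Matrix.reindex_apply, Matrix.submatrix_apply, Matrix.kroneckerMap_apply,
    Matrix.smul_apply, smul_eq_mul]
  ring

private lemma kron_smul_right {a b c d : ℕ} (r : ℂ) (M : Matrix (Fin a) (Fin b) ℂ)
    (N : Matrix (Fin c) (Fin d) ℂ) : kron M (r • N) = r • kron M N := by
  ext i j
  simp only [kron, Matrix.reindex_apply, Matrix.submatrix_apply, Matrix.kroneckerMap_apply,
    Matrix.smul_apply, smul_eq_mul]
  ring

private lemma smul_mul_smul'' {m n p : ℕ} (r s : ℂ) (M : Matrix (Fin m) (Fin n) ℂ)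
    (N : Matrix (Fin n) (Fin p) ℂ) : (r • M) * (s • N) = (r * s) • (M * N) := by
  rw [Matrix.smul_mul, Matrix.mul_smul, smul_smul, mul_comm]

private def Az : Matrix (Fin 2) (Fin 4) ℤ := !![1,0,0,2;0,-1,1,0]
private def Bz : Matrix (Fin 2) (Fin 8) ℤ := !![1,0,0,2,0,-2,2,0;0,1,-1,0,1,0,0,2]

private lemma hA : !![(1 : ℂ)/2, 0, 0, 1; 0, -(1/2), 1/2, 0] = (2⁻¹ : ℂ) • cm Az := by
  ext i j
  fin_cases i <;> fin_cases j <;>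
    simp [cm, Az, Matrix.smul_apply, Matrix.map_apply,
      finv_4_1, finv_4_2, finv_4_3, finv_3_1, finv_3_2, finv_2_1, Matrix.cons_val_succ] <;>
    norm_num

private lemma hB : !![(1 : ℂ)/4, 0, 0, 1/2, 0, -(1/2), 1/2, 0;
      0, 1/4, -(1/4), 0, 1/4, 0, 0, 1/2] = (4⁻¹ : ℂ) • cm Bz := by
  ext i j
  fin_cases i <;> fin_cases j <;>
    simp [cm, Bz, Matrix.smul_apply, Matrix.map_apply,
      finv_8_1, finv_8_2, finv_8_3, finv_8_4, finv_8_5, finv_8_6, finv_8_7,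
      finv_7_1, finv_7_2, finv_7_3, finv_7_4, finv_7_5, finv_7_6,
      finv_6_1, finv_6_2, finv_6_3, finv_6_4, finv_6_5,
      finv_5_1, finv_5_2, finv_5_3, finv_5_4,
      finv_4_1, finv_4_2, finv_4_3, finv_3_1, finv_3_2, finv_2_1, Matrix.cons_val_succ] <;>
    norm_num

private lemma dec1 : Az * kron Az (1 : Matrix (Fin 2) (Fin 2) ℤ) ≠
    Az * kron (1 : Matrix (Fin 2) (Fin 2) ℤ) Az := by decide

private lemma dec2 : Az * kron (1 : Matrix (Fin 2) (Fin 2) ℤ) Az = Bz := by decide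

set_option maxHeartbeats 4000000 in
private lemma dec3 : Bz * kron (kron Bz (1 : Matrix (Fin 2) (Fin 2) ℤ)) (1 : Matrix (Fin 2) (Fin 2) ℤ) =
    Bz * kron (kron (1 : Matrix (Fin 2) (Fin 2) ℤ) Bz) (1 : Matrix (Fin 2) (Fin 2) ℤ) := by decide

set_option maxHeartbeats 4000000 in
private lemma dec4 : Bz * kron (kron (1 : Matrix (Fin 2) (Fin 2) ℤ) Bz) (1 : Matrix (Fin 2) (Fin 2) ℤ) =
    Bz * kron (kron (1 : Matrix (Fin 2) (Fin 2) ℤ) (1 : Matrix (Fin 2) (Fin 2) ℤ)) Bz := by decide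

private lemma T_eq : T !![(1 : ℂ)/2, 0, 0, 1; 0, -(1/2), 1/2, 0]
    = (4⁻¹ : ℂ) • cm Bz := by
  show !![(1 : ℂ)/2, 0, 0, 1; 0, -(1/2), 1/2, 0] *
      kron (1 : Matrix (Fin 2) (Fin 2) ℂ) !![(1 : ℂ)/2, 0, 0, 1; 0, -(1/2), 1/2, 0]
    = (4⁻¹ : ℂ) • cm Bz
  rw [hA, ← cm_one (n := 2), kron_smul_right, ← cm_kron, smul_mul_smul'', ← cm_mul, dec2]
  norm_num

/-- A = A₂(1/2,0,−1/2) is not associative as a binary algebra, yet the 3-algebra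
it generates, T(A), is totally associative (and equals the stated 2×8 matrix).
Thus a totally associative 3-algebra can be generated by a non-associative
algebra. -/
theorem nonassoc_gives_totAssoc_A2_half :
    !![(1 : ℂ)/2, 0, 0, 1;
         0, -(1/2), 1/2, 0] * kron !![(1 : ℂ)/2, 0, 0, 1;
         0, -(1/2), 1/2, 0] (1 : Matrix (Fin 2) (Fin 2) ℂ) ≠
        !![(1 : ℂ)/2, 0, 0, 1;
         0, -(1/2), 1/2, 0] * kron (1 : Matrix (Fin 2) (Fin 2) ℂ) !![(1 : ℂ)/2, 0, 0, 1;
         0, -(1/2), 1/2, 0] ∧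
      T !![(1 : ℂ)/2, 0, 0, 1;
         0, -(1/2), 1/2, 0] = !![(1 : ℂ)/4, 0, 0, 1/2, 0, -(1/2), 1/2, 0;
         0, 1/4, -(1/4), 0, 1/4, 0, 0, 1/2] ∧
      TotAssoc (T !![(1 : ℂ)/2, 0, 0, 1;
         0, -(1/2), 1/2, 0]) := by
  refine ⟨?_, ?_, ?_, ?_⟩
  · intro h
    rw [hA, ← cm_one (n := 2), kron_smul_left, kron_smul_right, ← cm_kron, ← cm_kron,
      smul_mul_smul'', smul_mul_smul'', ← cm_mul, ← cm_mul] at h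
    have h2 := smul_right_injective (Matrix (Fin 2) (Fin 8) ℂ)
      (by norm_num : (2⁻¹ * 2⁻¹ : ℂ) ≠ 0) h
    exact dec1 (cm_inj h2)
  · rw [T_eq, hB]
  · rw [T_eq, ← cm_one (n := 2)]
    simp only [kron_smul_left, kron_smul_right]
    simp only [← cm_kron]
    rw [smul_mul_smul'', smul_mul_smul'', ← cm_mul, ← cm_mul, dec3]
  · rw [T_eq, ← cm_one (n := 2)]
    simp only [kron_smul_left, kron_smul_right]
    simp only [← cm_kron]
    rw [smul_mul_smul'', smul_mul_smul'', ← cm_mul, ← cm_mul, dec4]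
end
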